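/- Z_Φ is a Φ-invariant (i.e. Z_Φ is an ideal of ℝ[x], p(v₀) = 0 for every p ∈ Z_Φ, and 𝓛(p) ∈ Z_Φ for every p ∈ Z_Φ), and every Φ-invariant is contained in Z_Φ; hence Z_Φ equals the union of all Φ-invariants. -/

import Mathlib

open MvPolynomial

/-- The Lie derivative of a polynomial along the polynomial vector field `F`. -/
noncomputable def lieDeriv {N : ℕ} (F : Fin N → MvPolynomial (Fin N) ℝ)
    (p : MvPolynomial (Fin N) ℝ) : MvPolynomial (Fin N) ℝ :=
  ∑ i, pderiv i p * F i

/-- `I` is a `Φ`-invariant ideal: every element vanishes at `v₀` and `I` is closed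
under Lie derivation. -/
def IsInvariantIdeal {N : ℕ} (F : Fin N → MvPolynomial (Fin N) ℝ) (v₀ : Fin N → ℝ)
    (I : Ideal (MvPolynomial (Fin N) ℝ)) : Prop :=
  (∀ p ∈ I, eval v₀ p = 0) ∧ ∀ p ∈ I, lieDeriv F p ∈ I

/-- `Z_Φ`: the set of polynomials whose induced behaviour vanishes identically on `D`. -/
def Zset {N : ℕ} (x : ℝ → Fin N → ℝ) (D : Set ℝ) : Set (MvPolynomial (Fin N) ℝ) :=
  {p | ∀ t ∈ D, eval (x t) p = 0}

/-! Along the solution, `p ∘ x` has derivative `(𝓛 p) ∘ x`, so its `n`-th derivative at `0` is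
`(𝓛ⁿ p)(v₀)`. For `p` in an invariant ideal all these vanish, so the analytic function `p ∘ x`
vanishes near `0`, hence on the interval `D` by the identity theorem. Conversely `Z_Φ` is closed
under `𝓛` because a function vanishing on the open set `D` has zero derivative there. -/

open Filter Topology

theorem AnalyticOnNhd.eqOn_zero_of_iteratedDeriv_eq_zero {𝕜 E : Type*}
    [NontriviallyNormedField 𝕜] [CharZero 𝕜] [NormedAddCommGroup E] [NormedSpace 𝕜 E]
    [CompleteSpace E] {f : 𝕜 → E} {U : Set 𝕜} {z₀ : 𝕜} (hf : AnalyticOnNhd 𝕜 f U)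
    (hU : IsPreconnected U) (h₀ : z₀ ∈ U) (h : ∀ n, iteratedDeriv n f z₀ = 0) :
    Set.EqOn f 0 U := by
  have hord : analyticOrderAt f z₀ = ⊤ := ENat.eq_top_iff_forall_ge.2 fun n =>
    (natCast_le_analyticOrderAt_iff_iteratedDeriv_eq_zero (hf z₀ h₀)).2 fun i _ => h i
  exact hf.eqOn_zero_of_preconnected_of_eventuallyEq_zero hU h₀ (analyticOrderAt_eq_top.1 hord)

section LieDerivative

variable {N : ℕ} (F : Fin N → MvPolynomial (Fin N) ℝ)

theorem lieDeriv_C (a : ℝ) : lieDeriv F (C a) = 0 := by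
  simp [lieDeriv]

theorem lieDeriv_add (p q : MvPolynomial (Fin N) ℝ) :
    lieDeriv F (p + q) = lieDeriv F p + lieDeriv F q := by
  simp [lieDeriv, add_mul, Finset.sum_add_distrib]

theorem lieDeriv_mul_X (p : MvPolynomial (Fin N) ℝ) (n : Fin N) :
    lieDeriv F (p * X n) = lieDeriv F p * X n + p * F n := by
  simp only [lieDeriv, pderiv_mul, add_mul, Finset.sum_add_distrib, Finset.sum_mul]
  congr 1
  · exact Finset.sum_congr rfl fun i _ => by ring
  · simp [pderiv_X, Pi.single_apply]

theorem hasDerivAt_eval_lieDeriv {x : ℝ → Fin N → ℝ} {t : ℝ}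
    (hx : HasDerivAt x (fun i => eval (x t) (F i)) t) (p : MvPolynomial (Fin N) ℝ) :
    HasDerivAt (fun s => eval (x s) p) (eval (x t) (lieDeriv F p)) t := by
  induction p using MvPolynomial.induction_on with
  | C a => simpa [lieDeriv_C] using hasDerivAt_const t a
  | add p q hp hq => simpa only [eval_add, lieDeriv_add, Pi.add_def] using hp.add hq
  | mul_X p n hp =>
    simpa only [eval_mul, eval_X, lieDeriv_mul_X, map_add, map_mul, Pi.mul_def] using hp.mul (hasDerivAt_pi.1 hx n)

theorem iteratedDeriv_eval_eq_eval_iterate_lieDeriv {x : ℝ → Fin N → ℝ} {D : Set ℝ}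
    (hD : IsOpen D) (hsol : ∀ t ∈ D, HasDerivAt x (fun i => eval (x t) (F i)) t)
    (n : ℕ) (p : MvPolynomial (Fin N) ℝ) {t : ℝ} (ht : t ∈ D) :
    iteratedDeriv n (fun s => eval (x s) p) t = eval (x t) ((lieDeriv F)^[n] p) := by
  induction n generalizing p with
  | zero => simp
  | succ n ih =>
    have hderiv : deriv (fun s => eval (x s) p) =ᶠ[𝓝 t] fun s => eval (x s) (lieDeriv F p) := by
      filter_upwards [hD.mem_nhds ht] with s hs
      exact (hasDerivAt_eval_lieDeriv F (hsol s hs) p).deriv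
    rw [iteratedDeriv_succ', hderiv.iteratedDeriv_eq n, ih, Function.iterate_succ_apply]

end LieDerivative

section InvariantIdeal

variable {N : ℕ} {F : Fin N → MvPolynomial (Fin N) ℝ} {v₀ : Fin N → ℝ}
  {x : ℝ → Fin N → ℝ} {D : Set ℝ}

variable (x D) in
noncomputable def Zideal : Ideal (MvPolynomial (Fin N) ℝ) :=
  ⨅ t ∈ D, RingHom.ker (eval (x t))

variable (x D) in
theorem coe_Zideal : (Zideal x D : Set (MvPolynomial (Fin N) ℝ)) = Zset x D := by
  ext p
  simp [Zideal, Zset]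

theorem isInvariantIdeal_Zideal (hD : IsOpen D) (h0 : (0 : ℝ) ∈ D)
    (hsol : ∀ t ∈ D, HasDerivAt x (fun i => eval (x t) (F i)) t) (hx0 : x 0 = v₀) :
    IsInvariantIdeal F v₀ (Zideal x D) := by
  simp only [IsInvariantIdeal, ← SetLike.mem_coe, coe_Zideal]
  refine ⟨fun p hp => hx0 ▸ hp 0 h0, fun p hp t ht => ?_⟩
  have hzero : (fun s => eval (x s) p) =ᶠ[𝓝 t] fun _ => 0 := by
    filter_upwards [hD.mem_nhds ht] with s hs
    exact hp s hs
  exact (hasDerivAt_eval_lieDeriv F (hsol t ht) p).unique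
    ((hasDerivAt_const t 0).congr_of_eventuallyEq hzero)

theorem IsInvariantIdeal.subset_Zset {I : Ideal (MvPolynomial (Fin N) ℝ)}
    (hI : IsInvariantIdeal F v₀ I) (hD : IsOpen D) (hDc : D.OrdConnected) (h0 : (0 : ℝ) ∈ D)
    (hsol : ∀ t ∈ D, HasDerivAt x (fun i => eval (x t) (F i)) t) (hx0 : x 0 = v₀)
    (han : ∀ i, AnalyticOnNhd ℝ (fun t => x t i) D) :
    (I : Set (MvPolynomial (Fin N) ℝ)) ⊆ Zset x D := by
  intro p hp
  have hiter : ∀ n, (lieDeriv F)^[n] p ∈ I := fun n => by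
    induction n with
    | zero => exact hp
    | succ n ih => exact Function.iterate_succ_apply' (lieDeriv F) n p ▸ hI.2 _ ih
  have hanalytic : AnalyticOnNhd ℝ (fun t => eval (x t) p) D := by
    exact AnalyticOnNhd.aeval_mvPolynomial han p
  refine hanalytic.eqOn_zero_of_iteratedDeriv_eq_zero hDc.isPreconnected h0 fun n => ?_
  rw [iteratedDeriv_eval_eq_eval_iterate_lieDeriv F hD hsol n p h0, hx0]
  exact hI.1 _ (hiter n)

end InvariantIdeal

theorem stmt6_general
    (N : ℕ)
    (F : Fin N → MvPolynomial (Fin N) ℝ) (v₀ : Fin N → ℝ)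
    (D : Set ℝ) (hD : IsOpen D) (hDc : D.OrdConnected) (h0 : (0 : ℝ) ∈ D)
    (x : ℝ → Fin N → ℝ)
    (hsol : ∀ t ∈ D, HasDerivAt x (fun i => eval (x t) (F i)) t)
    (hx0 : x 0 = v₀)
    (han : ∀ i, AnalyticOnNhd ℝ (fun t => x t i) D) :
    (∃ I : Ideal (MvPolynomial (Fin N) ℝ),
        (I : Set (MvPolynomial (Fin N) ℝ)) = Zset x D ∧ IsInvariantIdeal F v₀ I) ∧
    (∀ I : Ideal (MvPolynomial (Fin N) ℝ), IsInvariantIdeal F v₀ I →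
        (I : Set (MvPolynomial (Fin N) ℝ)) ⊆ Zset x D) ∧
    Zset x D = ⋃ I ∈ {I : Ideal (MvPolynomial (Fin N) ℝ) | IsInvariantIdeal F v₀ I},
        (I : Set (MvPolynomial (Fin N) ℝ)) := by
  have hZ := isInvariantIdeal_Zideal hD h0 hsol hx0
  have hsub : ∀ I, IsInvariantIdeal F v₀ I → (I : Set (MvPolynomial (Fin N) ℝ)) ⊆ Zset x D :=
    fun I hI => hI.subset_Zset hD hDc h0 hsol hx0 han
  refine ⟨⟨Zideal x D, coe_Zideal x D, hZ⟩, hsub, ?_⟩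
  refine subset_antisymm (fun p hp => ?_) (Set.iUnion₂_subset hsub)
  exact Set.mem_biUnion (x := Zideal x D) hZ (by rwa [coe_Zideal])

/-- `Z_Φ` is a `Φ`-invariant ideal, every `Φ`-invariant is contained in
`Z_Φ`, and `Z_Φ` equals the union of all `Φ`-invariants. -/
theorem stmt6
    (N : ℕ) (hN : 1 ≤ N)
    (F : Fin N → MvPolynomial (Fin N) ℝ) (v₀ : Fin N → ℝ)
    (D : Set ℝ) (hD : IsOpen D) (hDc : D.OrdConnected) (h0 : (0 : ℝ) ∈ D)
    (x : ℝ → Fin N → ℝ)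
    (hsol : ∀ t ∈ D, HasDerivAt x (fun i => eval (x t) (F i)) t)
    (hx0 : x 0 = v₀)
    (han : ∀ i, AnalyticOnNhd ℝ (fun t => x t i) D) :
    (∃ I : Ideal (MvPolynomial (Fin N) ℝ),
        (I : Set (MvPolynomial (Fin N) ℝ)) = Zset x D ∧ IsInvariantIdeal F v₀ I) ∧
    (∀ I : Ideal (MvPolynomial (Fin N) ℝ), IsInvariantIdeal F v₀ I →
        (I : Set (MvPolynomial (Fin N) ℝ)) ⊆ Zset x D) ∧
    Zset x D = ⋃ I ∈ {I : Ideal (MvPolynomial (Fin N) ℝ) | IsInvariantIdeal F v₀ I},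
        (I : Set (MvPolynomial (Fin N) ℝ)) :=
  stmt6_general N F v₀ D hD hDc h0 x hsol hx0 han
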